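/- arXiv:1604.08137 — 3 statements merged into one kernel-verified Lean document; each statement's English description precedes it below -/
import Mathlib

section
/- Let k > 0, T₁ > T∞ ≥ 0 be real numbers, let 0 < α ≤ 1, and define T(x) = (T₁ − T∞)·x^(−α) + T∞ and C(x) = k·x·T(x). Then for all natural numbers N₁, N₂ with 1 ≤ N₁ < N₂, the inequality C(N₂) ≤ C(N₁) holds if and only if α = 1 and T∞ = 0 (in which case C(N₂) = C(N₁)). In particular, if α < 1 or T∞ > 0, then C is strictly increasing on the positive naturals. -/
private lemma crep (k T₁ Tinf α : ℝ) (T C : ℝ → ℝ)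
    (hT : ∀ x : ℝ, 0 < x → T x = (T₁ - Tinf) * x ^ (-α) + Tinf)
    (hC : ∀ x : ℝ, 0 < x → C x = k * x * T x) (x : ℝ) (hx : 0 < x) :
    C x = k * ((T₁ - Tinf) * x ^ (1 - α) + Tinf * x) := by
  rw [hC x hx, hT x hx]
  have : x ^ (1 - α) = x * x ^ (-α) := by
    rw [show (1 : ℝ) - α = 1 + (-α) by ring, Real.rpow_add hx, Real.rpow_one]
  rw [this]; ring

/-- With `T x = (T₁ - T∞) * x ^ (-α) + T∞` and
`C x = k * x * T x` (`k > 0`, `T₁ > T∞ ≥ 0`, `0 < α ≤ 1`), for all naturals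
`1 ≤ N₁ < N₂` one has `C N₂ ≤ C N₁` iff `α = 1 ∧ T∞ = 0`, in which case
`C N₂ = C N₁`; in particular if `α < 1` or `T∞ > 0` then `C` is strictly
increasing on the positive naturals. -/
theorem stmt3 (k T₁ Tinf α : ℝ) (hk : 0 < k) (hTinf : 0 ≤ Tinf) (hT₁ : Tinf < T₁)
    (hα0 : 0 < α) (hα1 : α ≤ 1)
    (T C : ℝ → ℝ)
    (hT : ∀ x : ℝ, 0 < x → T x = (T₁ - Tinf) * x ^ (-α) + Tinf)
    (hC : ∀ x : ℝ, 0 < x → C x = k * x * T x) :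
    (∀ N₁ N₂ : ℕ, 1 ≤ N₁ → N₁ < N₂ →
        (C (N₂ : ℝ) ≤ C (N₁ : ℝ) ↔ α = 1 ∧ Tinf = 0) ∧
        (α = 1 ∧ Tinf = 0 → C (N₂ : ℝ) = C (N₁ : ℝ))) ∧
      ((α < 1 ∨ 0 < Tinf) →
        ∀ N₁ N₂ : ℕ, 1 ≤ N₁ → N₁ < N₂ → C (N₁ : ℝ) < C (N₂ : ℝ)) := by
  have key : ∀ x y : ℝ, 0 < x → x < y → (α < 1 ∨ 0 < Tinf) → C x < C y := by
    intro x y hx hxy hcase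
    have hy : 0 < y := hx.trans hxy
    rw [crep k T₁ Tinf α T C hT hC x hx, crep k T₁ Tinf α T C hT hC y hy]
    have hTd : 0 < T₁ - Tinf := by linarith
    apply mul_lt_mul_of_pos_left _ hk
    rcases hcase with h | h
    · have h1 : x ^ (1 - α) < y ^ (1 - α) :=
        Real.rpow_lt_rpow hx.le hxy (by linarith)
      have h2 : Tinf * x ≤ Tinf * y := by nlinarith
      nlinarith
    · have h1 : x ^ (1 - α) ≤ y ^ (1 - α) :=
        Real.rpow_le_rpow hx.le hxy.le (by linarith)
      nlinarith
  have keq : ∀ x y : ℝ, 0 < x → 0 < y → α = 1 → Tinf = 0 → C x = C y := by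
    intro x y hx hy h1 h2
    rw [crep k T₁ Tinf α T C hT hC x hx, crep k T₁ Tinf α T C hT hC y hy,
      h1, h2]
    simp
  constructor
  · intro N₁ N₂ h1 h2
    have hx : (0 : ℝ) < (N₁ : ℝ) := by exact_mod_cast Nat.lt_of_lt_of_le Nat.zero_lt_one h1
    have hxy : (N₁ : ℝ) < (N₂ : ℝ) := by exact_mod_cast h2
    have hy : (0 : ℝ) < (N₂ : ℝ) := hx.trans hxy
    constructor
    · constructor
      · intro hle
        by_contra hne
        have : α < 1 ∨ 0 < Tinf := by
          rcases lt_or_eq_of_le hα1 with h | h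
          · exact Or.inl h
          · rcases lt_or_eq_of_le hTinf with h' | h'
            · exact Or.inr h'
            · exact absurd ⟨h, h'.symm⟩ hne
        exact absurd hle (not_le.mpr (key _ _ hx hxy this))
      · rintro ⟨h1, h2⟩
        exact (keq _ _ hy hx h1 h2).le
    · rintro ⟨h1, h2⟩
      exact keq _ _ hy hx h1 h2
  · intro hcase N₁ N₂ h1 h2
    have hx : (0 : ℝ) < (N₁ : ℝ) := by exact_mod_cast Nat.lt_of_lt_of_le Nat.zero_lt_one h1
    exact key _ _ hx (by exact_mod_cast h2) hcase
end

section
/- Let k > 0, a > 0, T₁ > T∞ ≥ 0 be real numbers and let 0 < α < 1. Define T(x) = (T₁ − T∞)·x^(−α) + T∞ and f(x) = (k·x + a)·T(x) for x > 0. Then the second derivative satisfies f″(x) > 0 for every real x with 0 < x ≤ (a/k)·(α/(1 − α)); that is, f is strictly convex on the interval (0, (a/k)·(α/(1 − α))]. -/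
open Set Filter Topology

/-!
Write `c = T₁ - T∞`. On `x > 0` the function is `f x = (k x + a) (c x^(-α) + T∞)`, and
`f'' = 2 k T' + (k x + a) T'' = c α x^(-α-2) ((α + 1) a - (1 - α) k x)`: the constant `T∞`
disappears, and the last factor is at least `(α + 1) a - α a = a > 0` as long as
`x ≤ (a / k) (α / (1 - α))`. Strict convexity then follows from `f'' > 0`.
-/

section AffineMulPowerLaw

variable (k a c d α : ℝ) {x : ℝ}

lemma hasDerivAt_affine_mul_powerLaw (hx : 0 < x) :
    HasDerivAt (fun y => (k * y + a) * (c * y ^ (-α) + d))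
      (k * (c * x ^ (-α) + d) - (k * x + a) * (c * α * x ^ (-α - 1))) x := by
  have hlin : HasDerivAt (fun y : ℝ => k * y + a) k x := by
    simpa using ((hasDerivAt_id x).const_mul k).add_const a
  have hpow : HasDerivAt (fun y : ℝ => c * y ^ (-α) + d) (-(c * α * x ^ (-α - 1))) x :=
    (((Real.hasDerivAt_rpow_const (p := -α) (Or.inl hx.ne')).const_mul c).add_const
      d).congr_deriv (by ring)
  exact (hlin.mul hpow).congr_deriv (by ring)

lemma hasDerivAt_deriv_affine_mul_powerLaw (hx : 0 < x) :
    HasDerivAt (fun y => k * (c * y ^ (-α) + d) - (k * y + a) * (c * α * y ^ (-α - 1)))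
      (c * α * x ^ (-α - 2) * ((α + 1) * a - (1 - α) * k * x)) x := by
  have hpow₁ := Real.hasDerivAt_rpow_const (p := -α) (Or.inl hx.ne')
  have hpow₂ := Real.hasDerivAt_rpow_const (p := -α - 1) (Or.inl hx.ne')
  have hlin : HasDerivAt (fun y : ℝ => k * y + a) k x := by
    simpa using ((hasDerivAt_id x).const_mul k).add_const a
  have hsplit : x ^ (-α - 1) = x ^ (-α - 2) * x := by
    rw [← Real.rpow_add_one hx.ne']
    ring_nf
  refine ((((hpow₁.const_mul c).add_const d).const_mul k).sub
    (hlin.mul (hpow₂.const_mul (c * α)))).congr_deriv ?_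
  rw [show -α - 1 - 1 = -α - 2 by ring, hsplit]
  ring

lemma deriv_deriv_affine_mul_powerLaw (hx : 0 < x) :
    deriv (deriv fun y => (k * y + a) * (c * y ^ (-α) + d)) x =
      c * α * x ^ (-α - 2) * ((α + 1) * a - (1 - α) * k * x) := by
  have hderiv : deriv (fun y => (k * y + a) * (c * y ^ (-α) + d)) =ᶠ[𝓝 x]
      fun y => k * (c * y ^ (-α) + d) - (k * y + a) * (c * α * y ^ (-α - 1)) :=
    eventually_of_mem (Ioi_mem_nhds hx) fun y hy =>
      (hasDerivAt_affine_mul_powerLaw k a c d α hy).deriv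
  rw [hderiv.deriv_eq, (hasDerivAt_deriv_affine_mul_powerLaw k a c d α hx).deriv]

end AffineMulPowerLaw

lemma deriv_deriv_congr_of_eqOn {f g : ℝ → ℝ} {s : Set ℝ} (hs : IsOpen s) (h : EqOn f g s)
    {x : ℝ} (hx : x ∈ s) : deriv (deriv f) x = deriv (deriv g) x := by
  have hfg : f =ᶠ[𝓝 x] g := eventually_of_mem (hs.mem_nhds hx) h
  exact hfg.deriv.deriv_eq

lemma sub_pos_of_le_mul_div_one_sub {k a α x : ℝ} (hk : 0 < k) (ha : 0 < a) (hα1 : α < 1)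
    (hx : x ≤ (a / k) * (α / (1 - α))) : 0 < (α + 1) * a - (1 - α) * k * x := by
  have h1α : 0 < 1 - α := sub_pos.2 hα1
  have hbound : (1 - α) * k * x ≤ a * α :=
    calc (1 - α) * k * x ≤ (1 - α) * k * ((a / k) * (α / (1 - α))) := by gcongr
      _ = a * α := by field_simp
  linarith

theorem stmt7_general (k a T₁ Tinf α : ℝ) (hk : 0 < k) (ha : 0 < a)
    (hT₁ : Tinf < T₁) (hα0 : 0 < α) (hα1 : α < 1)
    (T f : ℝ → ℝ)
    (hT : ∀ x : ℝ, 0 < x → T x = (T₁ - Tinf) * x ^ (-α) + Tinf)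
    (hf : ∀ x : ℝ, 0 < x → f x = (k * x + a) * T x) :
    (∀ x : ℝ, 0 < x → x ≤ (a / k) * (α / (1 - α)) →
        0 < deriv (deriv f) x) ∧
      StrictConvexOn ℝ (Set.Ioc (0 : ℝ) ((a / k) * (α / (1 - α)))) f := by
  set g := fun y : ℝ => (k * y + a) * ((T₁ - Tinf) * y ^ (-α) + Tinf)
  have hfg : EqOn f g (Ioi 0) := fun x hx => by simp only [g, hf x hx, hT x hx]
  have hf'' : ∀ x : ℝ, 0 < x → x ≤ (a / k) * (α / (1 - α)) → 0 < deriv (deriv f) x := by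
    intro x hx hxb
    rw [deriv_deriv_congr_of_eqOn isOpen_Ioi hfg hx, deriv_deriv_affine_mul_powerLaw _ _ _ _ _ hx]
    have := sub_pos_of_le_mul_div_one_sub hk ha hα1 hxb
    have := sub_pos.2 hT₁
    positivity
  have hcont : ContinuousOn f (Ioc 0 ((a / k) * (α / (1 - α)))) := fun x hx =>
    ((hasDerivAt_affine_mul_powerLaw k a _ Tinf α hx.1).continuousAt.continuousWithinAt).congr
      (fun y hy => hfg hy.1) (hfg hx.1)
  refine ⟨hf'', strictConvexOn_of_deriv2_pos' (convex_Ioc _ _) hcont fun x hx => ?_⟩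
  simpa only [Function.iterate_succ, Function.iterate_zero, Function.comp_apply, id_eq]
    using hf'' x hx.1 hx.2

/-- With `T x = (T₁ - T∞) * x ^ (-α) + T∞` and
`f x = (k·x + a)·T x` (`k, a > 0`, `T₁ > T∞ ≥ 0`, `0 < α < 1`),
the second derivative `f″(x)` is strictly positive for every
`0 < x ≤ (a/k)·(α/(1 − α))`; that is, `f` is strictly convex on the
interval `(0, (a/k)·(α/(1 − α))]`. -/
theorem stmt7 (k a T₁ Tinf α : ℝ) (hk : 0 < k) (ha : 0 < a)
    (hTinf : 0 ≤ Tinf) (hT₁ : Tinf < T₁) (hα0 : 0 < α) (hα1 : α < 1)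
    (T f : ℝ → ℝ)
    (hT : ∀ x : ℝ, 0 < x → T x = (T₁ - Tinf) * x ^ (-α) + Tinf)
    (hf : ∀ x : ℝ, 0 < x → f x = (k * x + a) * T x) :
    (∀ x : ℝ, 0 < x → x ≤ (a / k) * (α / (1 - α)) →
        0 < deriv (deriv f) x) ∧
      StrictConvexOn ℝ (Set.Ioc (0 : ℝ) ((a / k) * (α / (1 - α)))) f :=
  stmt7_general k a T₁ Tinf α hk ha hT₁ hα0 hα1 T f hT hf
end

section
/- Let k > 0, a > 0, T₁ > T∞ ≥ 0 be real numbers and let 0 < α < 1. Define T(x) = (T₁ − T∞)·x^(−α) + T∞ and f(x) = (k·x + a)·T(x) for x > 0. Then there exists a real number x₀ with 0 < x₀ ≤ (a/k)·(α/(1 − α)) such that f is strictly decreasing on (0, x₀] and strictly increasing on [x₀, ∞). In particular, f attains a unique minimum on (0, ∞) at x₀. -/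
/-!
Writing `c = T₁ - T∞`, the derivative of `f` is
`f' x = c x^(-(α+1)) (k(1-α)x - αa) + kT∞`.
On `(0, X]` with `X = αa / (k(1-α))` the factor `x^(-(α+1))` is positive and decreasing while
`k(1-α)x - αa` is nonpositive and increasing, so `f'` is strictly increasing there. Since `f'`
tends to `-∞` at `0⁺`, equals `kT∞ ≥ 0` at `X` and is positive beyond `X`, it changes sign exactly
once, at some `x₀ ∈ (0, X]`, from negative to positive.
-/

open Filter Topology Set

section SignChange

variable {f f' g : ℝ → ℝ} {l x₀ X : ℝ}

theorem exists_neg_pos_of_strictMonoOn_Ioc (hlX : l < X) (hcont : ContinuousOn g (Ioc l X))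
    (hmono : StrictMonoOn g (Ioc l X)) (hlim : ∀ᶠ x in 𝓝[>] l, g x < 0) (hgX : 0 ≤ g X)
    (hpos : ∀ x, X < x → 0 < g x) :
    ∃ x₀ ∈ Ioc l X, (∀ x ∈ Ioo l x₀, g x < 0) ∧ ∀ x, x₀ < x → 0 < g x := by
  obtain ⟨ε, hgε, hε⟩ := (hlim.and (Ioo_mem_nhdsGT hlX)).exists
  obtain ⟨x₀, hx₀, hgx₀⟩ := intermediate_value_Icc hε.2.le
    (hcont.mono (Icc_subset_Ioc hε.1 le_rfl)) ⟨hgε.le, hgX⟩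
  have hx₀' : x₀ ∈ Ioc l X := ⟨hε.1.trans_le hx₀.1, hx₀.2⟩
  refine ⟨x₀, hx₀', fun x hx => ?_, fun x hx => ?_⟩
  · rw [← hgx₀]
    exact hmono ⟨hx.1, hx.2.le.trans hx₀'.2⟩ hx₀' hx.2
  · rcases le_or_gt x X with hxX | hXx
    · rw [← hgx₀]
      exact hmono hx₀' ⟨hx₀'.1.trans hx, hxX⟩ hx
    · exact hpos x hXx

theorem unimodal_of_hasDerivAt_neg_pos (hlx : l < x₀) (hf : ∀ x, l < x → HasDerivAt f (f' x) x)
    (hneg : ∀ x ∈ Ioo l x₀, f' x < 0) (hpos : ∀ x, x₀ < x → 0 < f' x) :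
    StrictAntiOn f (Ioc l x₀) ∧ StrictMonoOn f (Ici x₀) ∧ ∀ x, l < x → x ≠ x₀ → f x₀ < f x := by
  have hanti : StrictAntiOn f (Ioc l x₀) :=
    strictAntiOn_of_hasDerivWithinAt_neg (convex_Ioc l x₀)
      (HasDerivAt.continuousOn fun x hx => hf x hx.1)
      (by rw [interior_Ioc]; exact fun x hx => (hf x hx.1).hasDerivWithinAt)
      (by rw [interior_Ioc]; exact hneg)
  have hmono : StrictMonoOn f (Ici x₀) :=
    strictMonoOn_of_hasDerivWithinAt_pos (convex_Ici x₀)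
      (HasDerivAt.continuousOn fun x hx => hf x (hlx.trans_le hx))
      (by rw [interior_Ici]; exact fun x hx => (hf x (hlx.trans hx)).hasDerivWithinAt)
      (by rw [interior_Ici]; exact hpos)
  refine ⟨hanti, hmono, fun x hx hne => ?_⟩
  rcases hne.lt_or_gt with hlt | hgt
  · exact hanti ⟨hx, hlt.le⟩ ⟨hlx, le_rfl⟩ hlt
  · exact hmono (mem_Ici.2 le_rfl) hgt.le hgt

end SignChange

noncomputable def rpowNegMulAffine (c p b d e x : ℝ) : ℝ :=
  c * x ^ (-p) * (b * x - d) + e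

section RpowNegMulAffine

variable {c p b d e : ℝ}

theorem rpowNegMulAffine_strictMonoOn (hc : 0 < c) (hp : 0 < p) (hb : 0 < b) :
    StrictMonoOn (rpowNegMulAffine c p b d e) (Ioc 0 (d / b)) := by
  intro x hx y hy hxy
  have hy0 : 0 < y := hx.1.trans hxy
  have hbxy : b * x < b * y := mul_lt_mul_of_pos_left hxy hb
  have hby : b * y ≤ d := (le_div_iff₀' hb).mp hy.2
  have hpow : y ^ (-p) < x ^ (-p) := Real.rpow_lt_rpow_of_neg hx.1 hxy (neg_neg_of_pos hp)
  have hcy : 0 < c * y ^ (-p) := mul_pos hc (Real.rpow_pos_of_pos hy0 _)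
  unfold rpowNegMulAffine
  have : c * x ^ (-p) * (b * x - d) < c * y ^ (-p) * (b * y - d) :=
    calc c * x ^ (-p) * (b * x - d)
        < c * y ^ (-p) * (b * x - d) :=
          mul_lt_mul_of_neg_right (mul_lt_mul_of_pos_left hpow hc) (by linarith)
      _ < c * y ^ (-p) * (b * y - d) := mul_lt_mul_of_pos_left (by linarith) hcy
  linarith

theorem rpowNegMulAffine_pos (hc : 0 < c) (hb : 0 < b) (he : 0 ≤ e) {x : ℝ} (hx : 0 < x)
    (hdx : d / b < x) : 0 < rpowNegMulAffine c p b d e x := by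
  have hlin : 0 < b * x - d := sub_pos.mpr ((div_lt_iff₀' hb).mp hdx)
  exact add_pos_of_pos_of_nonneg (mul_pos (mul_pos hc (Real.rpow_pos_of_pos hx _)) hlin) he

theorem rpowNegMulAffine_div (hb : b ≠ 0) : rpowNegMulAffine c p b d e (d / b) = e := by
  rw [rpowNegMulAffine, mul_div_cancel₀ _ hb, sub_self, mul_zero, zero_add]

theorem continuousOn_rpowNegMulAffine : ContinuousOn (rpowNegMulAffine c p b d e) (Ioi 0) :=
  fun x hx => by
    unfold rpowNegMulAffine
    exact ContinuousAt.continuousWithinAt (by fun_prop (disch := exact Or.inl (ne_of_gt hx)))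

theorem tendsto_rpowNegMulAffine_nhdsGT_zero (hc : 0 < c) (hp : 0 < p) (hd : 0 < d) :
    Tendsto (rpowNegMulAffine c p b d e) (𝓝[>] 0) atBot := by
  have hpow : Tendsto (fun x : ℝ => c * x ^ (-p)) (𝓝[>] 0) atTop :=
    (tendsto_rpow_neg_nhdsGT_zero (neg_neg_of_pos hp)).const_mul_atTop hc
  have hlin : Tendsto (fun x : ℝ => b * x - d) (𝓝[>] 0) (𝓝 (-d)) :=
    tendsto_nhdsWithin_of_tendsto_nhds
      ((by fun_prop : Continuous fun x : ℝ => b * x - d).tendsto' 0 (-d) (by simp))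
  exact (hpow.atTop_mul_neg (neg_neg_of_pos hd) hlin).atBot_add tendsto_const_nhds

end RpowNegMulAffine

theorem hasDerivAt_affine_mul_rpow_neg_add {k a c α e x : ℝ} (hx : x ≠ 0) :
    HasDerivAt (fun y => (k * y + a) * (c * y ^ (-α) + e))
      (rpowNegMulAffine c (α + 1) (k * (1 - α)) (α * a) (k * e) x) x := by
  have hpow : HasDerivAt (fun y => c * y ^ (-α) + e) (c * (-α * x ^ (-α - 1))) x :=
    ((Real.hasDerivAt_rpow_const (Or.inl hx)).const_mul c).add_const e
  have hlin : HasDerivAt (fun y => k * y + a) k x := by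
    simpa using ((hasDerivAt_id x).const_mul k).add_const a
  refine (hlin.mul hpow).congr_deriv ?_
  have hsplit : x ^ (-α) = x ^ (-(α + 1)) * x := by
    rw [← Real.rpow_add_one hx]; ring_nf
  rw [rpowNegMulAffine, hsplit, show -α - 1 = -(α + 1) by ring]
  ring

/-- With `T x = (T₁ - T∞) * x ^ (-α) + T∞` and
`f x = (k·x + a)·T x` (`k, a > 0`, `T₁ > T∞ ≥ 0`, `0 < α < 1`),
there is `x₀` with `0 < x₀ ≤ (a/k)·(α/(1 − α))` such that `f` is strictly
decreasing on `(0, x₀]` and strictly increasing on `[x₀, ∞)`; in particular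
`f` attains a unique minimum on `(0, ∞)` at `x₀`. -/
theorem stmt9 (k a T₁ Tinf α : ℝ) (hk : 0 < k) (ha : 0 < a)
    (hTinf : 0 ≤ Tinf) (hT₁ : Tinf < T₁) (hα0 : 0 < α) (hα1 : α < 1)
    (T f : ℝ → ℝ)
    (hT : ∀ x : ℝ, 0 < x → T x = (T₁ - Tinf) * x ^ (-α) + Tinf)
    (hf : ∀ x : ℝ, 0 < x → f x = (k * x + a) * T x) :
    ∃ x₀ : ℝ, 0 < x₀ ∧ x₀ ≤ (a / k) * (α / (1 - α)) ∧
      StrictAntiOn f (Set.Ioc (0 : ℝ) x₀) ∧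
      StrictMonoOn f (Set.Ici x₀) ∧
      ∀ x : ℝ, 0 < x → x ≠ x₀ → f x₀ < f x := by
  have hc : 0 < T₁ - Tinf := sub_pos.mpr hT₁
  have hb : 0 < k * (1 - α) := mul_pos hk (sub_pos.mpr hα1)
  have hd : 0 < α * a := mul_pos hα0 ha
  have hX : α * a / (k * (1 - α)) = a / k * (α / (1 - α)) := by
    rw [div_mul_div_comm, mul_comm a α]
  set φ := rpowNegMulAffine (T₁ - Tinf) (α + 1) (k * (1 - α)) (α * a) (k * Tinf)
  have hderiv : ∀ x, 0 < x → HasDerivAt f (φ x) x := fun x hx =>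
    (hasDerivAt_affine_mul_rpow_neg_add hx.ne').congr_of_eventuallyEq
      ((lt_mem_nhds hx).mono fun y hy => by rw [hf y hy, hT y hy])
  obtain ⟨x₀, hx₀, hneg, hpos⟩ := exists_neg_pos_of_strictMonoOn_Ioc (g := φ) (div_pos hd hb)
    (continuousOn_rpowNegMulAffine.mono Ioc_subset_Ioi_self)
    (rpowNegMulAffine_strictMonoOn hc (by linarith) hb)
    ((tendsto_rpowNegMulAffine_nhdsGT_zero hc (by linarith) hd).eventually_lt_atBot 0)
    (by rw [show φ _ = _ from rpowNegMulAffine_div hb.ne']; positivity)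
    (fun x hx => rpowNegMulAffine_pos hc hb (by positivity) ((div_pos hd hb).trans hx) hx)
  exact ⟨x₀, hx₀.1, hX ▸ hx₀.2, unimodal_of_hasDerivAt_neg_pos hx₀.1 hderiv hneg hpos⟩
end
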